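/- arXiv:1704.02303 — 7 statements merged into one kernel-verified Lean document; each statement's English description precedes it below -/
import Mathlib

section
/- Consider an instance of the stable matching problem with quotas in which the distance function d is injective. Then the greedy closest-pair matching is well defined (at every step of the recursion there is a unique distance-minimizing available pair), matches every site, assigns to each center c exactly q(c) sites, and the resulting matching is stable. -/
/-- Given a partial run `L` of the greedy algorithm (the list of center–site pairs matched
so far), the pair `p` is *available*: its site is not yet matched and its center has been
matched to fewer sites than its quota. -/
def AvailAfter {S C : Type*} [DecidableEq C] (q : C → ℕ) (L : List (C × S)) (p : C × S) :
    Prop :=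
  p.2 ∉ L.map Prod.snd ∧ (L.map Prod.fst).count p.1 < q p.1

/-- `L` is a run of the greedy closest-pair algorithm: each entry of `L` is, at the moment
it is matched, an available pair minimizing the distance `d` over all available pairs. -/
def IsGreedyRun {S C : Type*} [DecidableEq C] (q : C → ℕ) (d : C → S → ℝ)
    (L : List (C × S)) : Prop :=
  ∀ i : Fin L.length,
    AvailAfter q (L.take i) (L.get i) ∧
      ∀ p : C × S, AvailAfter q (L.take i) p → d (L.get i).1 (L.get i).2 ≤ d p.1 p.2

section Aux

variable {S C : Type*} [Fintype S] [Fintype C] [DecidableEq S] [DecidableEq C]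
  (q : C → ℕ) (d : C → S → ℝ)

lemma sum_count_eq' (l : List C) : ∑ c : C, l.count c = l.length := by
  simpa only [Multiset.coe_count, Multiset.coe_card] using
    Multiset.sum_count_eq_card (s := Finset.univ) (m := (l : Multiset C)) (fun a _ => Finset.mem_univ a)

lemma run_take {L : List (C × S)} (h : IsGreedyRun q d L) (n : ℕ) :
    IsGreedyRun q d (L.take n) := by
  intro i
  have hh : (i : ℕ) < min n L.length := lt_of_lt_of_eq i.2 List.length_take
  have hi : (i : ℕ) < L.length := by omega
  have h1 : (L.take n).take i = L.take i := by
    rw [List.take_take]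
    congr 1
    omega
  have h2 : (L.take n).get i = L.get ⟨i, hi⟩ := by
    simp [List.get_eq_getElem, List.getElem_take]
  rw [h1, h2]
  exact h ⟨i, hi⟩

lemma run_append {L : List (C × S)} {p : C × S} (h : IsGreedyRun q d L)
    (hp : AvailAfter q L p) (hmin : ∀ p', AvailAfter q L p' → d p.1 p.2 ≤ d p'.1 p'.2) :
    IsGreedyRun q d (L ++ [p]) := by
  intro i
  rcases lt_or_ge (i : ℕ) L.length with hi | hi
  · have h1 : (L ++ [p]).take i = L.take i := List.take_append_of_le_length (le_of_lt hi)
    have h2 : (L ++ [p]).get i = L.get ⟨i, hi⟩ := by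
      simp [List.get_eq_getElem, List.getElem_append_left hi]
    rw [h1, h2]
    exact h ⟨i, hi⟩
  · have hieq : (i : ℕ) = L.length := by
      have := i.2; simp at this; omega
    have h1 : (L ++ [p]).take i = L := by
      rw [hieq]; exact List.take_left
    have h2 : (L ++ [p]).get i = p := by
      simp [List.get_eq_getElem]
      exact List.getElem_concat_length hieq i.2
    rw [h1, h2]
    exact ⟨hp, hmin⟩

lemma run_nodup_count {L : List (C × S)} (h : IsGreedyRun q d L) :
    (L.map Prod.snd).Nodup ∧ ∀ c, (L.map Prod.fst).count c ≤ q c := by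
  induction L using List.reverseRecOn with
  | nil => simp
  | append_singleton L p ih =>
    have hL : IsGreedyRun q d L := by
      have := run_take q d h L.length
      rwa [List.take_left] at this
    have hlen : L.length < (L ++ [p]).length := by simp
    have hav := (h ⟨L.length, hlen⟩).1
    rw [show (L ++ [p]).take L.length = L from List.take_left,
      show (L ++ [p]).get ⟨L.length, hlen⟩ = p by
        simp [List.get_eq_getElem]] at hav
    obtain ⟨hnd, hct⟩ := ih hL
    constructor
    · simp only [List.map_append, List.map_cons, List.map_nil]
      rw [List.nodup_append]
      exact ⟨hnd, List.nodup_singleton _, by simpa using fun a x (hx : (x, a) ∈ L) (hap : a = p.2) => hav.1 (List.mem_map.2 ⟨(x, a), hx, hap⟩)⟩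
    · intro c
      simp only [List.map_append, List.map_cons, List.map_nil, List.count_append]
      rcases eq_or_ne c p.1 with rfl | hne
      · have := hav.2
        simp only [List.count_singleton]
        simp only [beq_self_eq_true, if_true]
        omega
      · simpa [List.count_singleton, hne, hne.symm] using hct c

lemma avail_nonempty (hq : ∑ c : C, q c = Fintype.card S)
    {L : List (C × S)} (hct : ∀ c, (L.map Prod.fst).count c ≤ q c)
    (hlen : L.length < Fintype.card S) : ∃ p : C × S, AvailAfter q L p := by
  obtain ⟨s, hs⟩ : ∃ s : S, s ∉ L.map Prod.snd := by
    by_contra hcon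
    push_neg at hcon
    have : (Finset.univ : Finset S) ⊆ (L.map Prod.snd).toFinset := fun s _ => by
      simpa using hcon s
    have := Finset.card_le_card this
    have h2 : (L.map Prod.snd).toFinset.card ≤ L.length := by
      simpa using List.toFinset_card_le (L.map Prod.snd)
    simp only [Finset.card_univ] at this
    omega
  obtain ⟨c, hc⟩ : ∃ c : C, (L.map Prod.fst).count c < q c := by
    by_contra hcon
    push_neg at hcon
    have : ∑ c : C, q c ≤ ∑ c : C, (L.map Prod.fst).count c :=
      Finset.sum_le_sum fun c _ => hcon c
    rw [sum_count_eq'] at this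
    simp only [List.length_map] at this
    omega
  exact ⟨(c, s), hs, hc⟩

lemma exists_unique_min (hd : Function.Injective fun p : C × S => d p.1 p.2)
    {L : List (C × S)} (hne : ∃ p : C × S, AvailAfter q L p) :
    ∃! p : C × S, AvailAfter q L p ∧
      ∀ p' : C × S, AvailAfter q L p' → d p.1 p.2 ≤ d p'.1 p'.2 := by
  classical
  obtain ⟨p₀, hp₀⟩ := hne
  obtain ⟨p, hp, hmin⟩ := Finset.exists_min_image
    (Finset.univ.filter fun p : C × S => AvailAfter q L p) (fun p => d p.1 p.2)
    ⟨p₀, by simpa using hp₀⟩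
  simp only [Finset.mem_filter, Finset.mem_univ, true_and] at hp hmin
  refine ⟨p, ⟨hp, fun p' hp' => hmin p' (by simpa using hp')⟩, ?_⟩
  rintro p' ⟨hp', hmin'⟩
  have h1 : d p'.1 p'.2 ≤ d p.1 p.2 := hmin' p hp
  have h2 : d p.1 p.2 ≤ d p'.1 p'.2 := hmin p' (by simpa using hp')
  exact hd (le_antisymm h1 h2)

lemma runs_eq (hd : Function.Injective fun p : C × S => d p.1 p.2)
    {L L' : List (C × S)} (h : IsGreedyRun q d L) (h' : IsGreedyRun q d L')
    (hl : L.length = L'.length) : L = L' := by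
  have key : ∀ i, ∀ (hi : i < L.length) (hi' : i < L'.length),
      L.get ⟨i, hi⟩ = L'.get ⟨i, hi'⟩ := by
    intro i
    induction i using Nat.strong_induction_on with
    | _ i ih =>
      intro hi hi'
      have htake : L.take i = L'.take i := by
        apply List.ext_get (by simp [hl])
        intro j hj hj'
        have hjl : j < L.length := lt_of_lt_of_le hj (by simpa using List.take_length_le _ _)
        have hjl' : j < L'.length := lt_of_lt_of_le hj' (by simpa using List.take_length_le _ _)
        have hji : j < i := by simp at hj; omega
        have e1 : (L.take i).get ⟨j, hj⟩ = L.get ⟨j, hjl⟩ := by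
          simp [List.get_eq_getElem, List.getElem_take]
        have e2 : (L'.take i).get ⟨j, hj'⟩ = L'.get ⟨j, hjl'⟩ := by
          simp [List.get_eq_getElem, List.getElem_take]
        rw [e1, e2]
        exact ih j hji hjl hjl'
      obtain ⟨ha, hm⟩ := h ⟨i, hi⟩
      obtain ⟨ha', hm'⟩ := h' ⟨i, hi'⟩
      rw [htake] at ha hm
      exact hd (le_antisymm (hm _ ha') (hm' _ ha))
  exact List.ext_get hl key

lemma exists_run (hq : ∑ c : C, q c = Fintype.card S)
    (hd : Function.Injective fun p : C × S => d p.1 p.2) :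
    ∀ k, k ≤ Fintype.card S → ∃ L : List (C × S), IsGreedyRun q d L ∧ L.length = k := by
  intro k
  induction k with
  | zero => exact fun _ => ⟨[], fun i => absurd i.2 (by simp), rfl⟩
  | succ k ih =>
    intro hk
    obtain ⟨L, hL, hlen⟩ := ih (le_of_lt hk)
    have hct := (run_nodup_count q d hL).2
    have hne := avail_nonempty q hq hct (by omega)
    obtain ⟨p, ⟨hp, hmin⟩, _⟩ := exists_unique_min q d hd hne
    exact ⟨L ++ [p], run_append q d hL hp hmin, by simp [hlen]⟩

end Aux

/-- With injective distances, the greedy closest-pair matching is well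
defined: at every step of the recursion there is a unique distance-minimizing available
pair, so there is exactly one complete greedy run; it matches every site, assigns to each
center `c` exactly `q c` sites, and the induced matching is stable. -/
theorem greedy_closest_pair_matching {S C : Type*} [Fintype S] [Fintype C]
    [DecidableEq S] [DecidableEq C]
    (q : C → ℕ) (d : C → S → ℝ)
    (hq : ∑ c : C, q c = Fintype.card S)
    (hd : Function.Injective fun p : C × S => d p.1 p.2) :
    (∀ L : List (C × S), IsGreedyRun q d L → L.length < Fintype.card S →
      ∃! p : C × S, AvailAfter q L p ∧
        ∀ p' : C × S, AvailAfter q L p' → d p.1 p.2 ≤ d p'.1 p'.2) ∧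
    (∃! L : List (C × S), IsGreedyRun q d L ∧ L.length = Fintype.card S) ∧
    (∀ L : List (C × S), IsGreedyRun q d L → L.length = Fintype.card S →
      (∀ s : S, ∃ c : C, (c, s) ∈ L) ∧
      (∀ c : C, (L.map Prod.fst).count c = q c) ∧
      (∀ M : S → C, (∀ p ∈ L, M p.2 = p.1) →
        (∀ c : C, (Finset.univ.filter fun s => M s = c).card = q c) ∧
        ¬ ∃ s : S, ∃ c : C, d c s < d (M s) s ∧
            ∃ s' : S, M s' = c ∧ d c s < d c s')) := by
  refine ⟨?_, ?_, ?_⟩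
  · intro L hL hlen
    exact exists_unique_min q d hd
      (avail_nonempty q hq (run_nodup_count q d hL).2 hlen)
  · obtain ⟨L, hL, hlen⟩ := exists_run q d hq hd (Fintype.card S) le_rfl
    exact ⟨L, ⟨hL, hlen⟩, fun L' ⟨hL', hlen'⟩ => runs_eq q d hd hL' hL (by omega)⟩
  · intro L hL hlen
    obtain ⟨hnd, hct⟩ := run_nodup_count q d hL
    -- counts equal quotas
    have hcount : ∀ c : C, (L.map Prod.fst).count c = q c := by
      have hsum : ∑ c : C, (L.map Prod.fst).count c = ∑ c : C, q c := by
        rw [sum_count_eq', hq]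
        simpa using hlen
      intro c
      exact ((Finset.sum_eq_sum_iff_of_le fun c _ => hct c).1 hsum c (Finset.mem_univ c))
    -- every site matched
    have hcover : ∀ s : S, s ∈ L.map Prod.snd := by
      intro s
      have hcard : (L.map Prod.snd).toFinset.card = Fintype.card S := by
        rw [List.toFinset_card_of_nodup hnd]
        simpa using hlen
      have : (L.map Prod.snd).toFinset = Finset.univ :=
        Finset.eq_univ_of_card _ hcard
      have := this ▸ Finset.mem_univ s
      simpa using this
    refine ⟨?_, hcount, ?_⟩
    · intro s
      obtain ⟨p, hp, hps⟩ := List.mem_map.1 (hcover s)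
      exact ⟨p.1, by rwa [show (p.1, s) = p by rw [← hps]]⟩
    · intro M hM
      constructor
      · intro c
        have h1 : (Finset.univ.filter fun s => M s = c) = ((L.map Prod.snd).filter
            fun s => decide (M s = c)).toFinset := by
          ext s
          simp only [Finset.mem_filter, Finset.mem_univ, true_and, List.mem_toFinset,
            List.mem_filter]
          constructor
          · intro h; exact ⟨hcover s, by simpa using h⟩
          · intro h; simpa using h.2
        rw [h1, List.toFinset_card_of_nodup (hnd.filter _)]
        have h2 : ((L.map Prod.snd).filter fun s => decide (M s = c)).length =
            (L.filter fun p => decide (p.1 = c)).length := by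
          rw [← List.countP_eq_length_filter, ← List.countP_eq_length_filter,
            List.countP_map]
          apply List.countP_congr
          intro p hp
          simp only [Function.comp_apply, decide_eq_true_eq, hM p hp]
        rw [h2, ← List.countP_eq_length_filter, ← hcount c]
        rw [List.count_eq_countP, List.countP_map]
        apply List.countP_congr
        intro p hp
        simp only [Function.comp_apply, decide_eq_true_eq, beq_iff_eq]
      · rintro ⟨s, c, hlt, s', hMs', hlt'⟩
        -- find indices
        have hsmem : s ∈ L.map Prod.snd := hcover s
        obtain ⟨ps, hpsL, hps2⟩ := List.mem_map.1 hsmem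
        have hMs : M s = ps.1 := by rw [← hps2]; exact hM ps hpsL
        obtain ⟨s'mem⟩ : Nonempty (s' ∈ L.map Prod.snd) := ⟨hcover s'⟩
        obtain ⟨ps', hps'L, hps'2⟩ := List.mem_map.1 s'mem
        have hc : ps'.1 = c := by rw [← hMs']; rw [← hps'2]; exact (hM ps' hps'L).symm
        obtain ⟨i, hi⟩ := List.mem_iff_get.1 hpsL
        obtain ⟨j, hj⟩ := List.mem_iff_get.1 hps'L
        have hss' : s ≠ s' := by
          rintro rfl
          rw [hMs'] at hlt
          exact lt_irrefl _ hlt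
        have hij : (i : ℕ) ≠ (j : ℕ) := by
          intro hcon
          apply hss'
          rw [← hps2, ← hps'2]
          congr 1
          rw [← hi, ← hj]
          congr 1
          exact Fin.ext hcon
        obtain ⟨hai, hmi⟩ := hL i
        obtain ⟨haj, hmj⟩ := hL j
        rcases lt_or_gt_of_ne hij with hij | hij
        · -- i < j : (c, s) available at step i, contradicting minimality of (M s, s)
          have hpre : L.take i <+: L.take j := by
            rw [show L.take (i:ℕ) = (L.take (j:ℕ)).take (i:ℕ) by
              rw [List.take_take]; congr 1; omega]
            exact List.take_prefix _ _
          have hcnt : ((L.take (i:ℕ)).map Prod.fst).count c < q c := by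
            have h1 : ((L.take (i:ℕ)).map Prod.fst).count c ≤
                ((L.take (j:ℕ)).map Prod.fst).count c :=
              ((hpre.map Prod.fst).sublist).count_le c
            have h2 := haj.2
            rw [hj, hc] at h2
            omega
          have hsm : s ∉ (L.take (i:ℕ)).map Prod.snd := by
            have := hai.1
            rwa [hi, hps2] at this
          have := hmi (c, s) ⟨hsm, hcnt⟩
          rw [hi, hps2, ← hMs] at this
          exact absurd hlt (not_lt.2 this)
        · -- j < i : (c, s) available at step j, contradicting minimality of (c, s')
          have hpre : L.take j <+: L.take i := by
            rw [show L.take (j:ℕ) = (L.take (i:ℕ)).take (j:ℕ) by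
              rw [List.take_take]; congr 1; omega]
            exact List.take_prefix _ _
          have hsm : s ∉ (L.take (j:ℕ)).map Prod.snd := by
            intro hmem
            have := hai.1
            rw [hi, hps2] at this
            exact this ((hpre.map Prod.snd).sublist.subset hmem)
          have hcnt : ((L.take (j:ℕ)).map Prod.fst).count c < q c := by
            have h2 := haj.2
            rwa [hj, hc] at h2
          have := hmj (c, s) ⟨hsm, hcnt⟩
          rw [hj, hc, hps'2] at this
          exact absurd hlt' (not_lt.2 this)
end

section
/- Consider an instance of the stable matching problem with quotas, and let (c_1, s_1), …, (c_N, s_N) be an enumeration of all pairs in C × S with d(c_1, s_1) ≤ d(c_2, s_2) ≤ … ≤ d(c_N, s_N). Process the pairs in this order, matching s_i to c_i whenever s_i is not yet matched and c_i currently has fewer than q(c_i) matched sites. Then at the end every site is matched, every center c is assigned exactly q(c) sites, and the resulting matching is stable. -/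
/-- One step of processing a center–site pair `p`: if the site `p.2` is not yet matched
and the center `p.1` currently has fewer than `q p.1` matched sites, match them;
otherwise do nothing. The partial matching is `f : S → Option C`. -/
def processPair {S C : Type*} [Fintype S] [DecidableEq S] [DecidableEq C]
    (q : C → ℕ) (f : S → Option C) (p : C × S) : S → Option C :=
  if f p.2 = none ∧ (Finset.univ.filter fun s => f s = some p.1).card < q p.1 then
    Function.update f p.2 (some p.1)
  else f

section Aux
variable {S C : Type*} [Fintype S] [DecidableEq S] [DecidableEq C]

def psaCnt (f : S → Option C) (c : C) : ℕ :=
  (Finset.univ.filter fun s => f s = some c).card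

theorem psa_step_some (q : C → ℕ) {f : S → Option C} {p : C × S} {s : S} {c : C}
    (h : f s = some c) : processPair q f p s = some c := by
  unfold processPair
  split
  · next hcond =>
    rcases eq_or_ne p.2 s with rfl | hne
    · rw [hcond.1] at h; exact absurd h (by simp)
    · rw [Function.update_of_ne (Ne.symm hne)]; exact h
  · exact h

theorem psa_foldl_some (q : C → ℕ) {f : S → Option C} {s : S} {c : C}
    (l : List (C × S)) (h : f s = some c) :
    (l.foldl (processPair q) f) s = some c := by
  induction l generalizing f with
  | nil => exact h
  | cons p l ih => exact ih (psa_step_some q h)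

theorem psa_step_new (q : C → ℕ) {f : S → Option C} {p : C × S} {s : S} {c : C}
    (h : processPair q f p s = some c) :
    f s = some c ∨ (p.1 = c ∧ p.2 = s ∧ f s = none ∧ psaCnt f c < q c) := by
  unfold processPair at h
  split at h
  · next hcond =>
    rcases eq_or_ne p.2 s with heq | hne
    · subst heq
      rw [Function.update_self] at h
      right
      have hc : p.1 = c := Option.some.inj h
      subst hc
      exact ⟨rfl, rfl, hcond.1, hcond.2⟩
    · rw [Function.update_of_ne (Ne.symm hne)] at h; exact Or.inl h
  · exact Or.inl h

theorem psa_foldl_new (q : C → ℕ) {f : S → Option C} {s : S} {c : C}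
    (l : List (C × S)) (h : (l.foldl (processPair q) f) s = some c) :
    f s = some c ∨ (c, s) ∈ l := by
  induction l generalizing f with
  | nil => exact Or.inl h
  | cons p l ih =>
    rcases ih h with h' | h'
    · rcases psa_step_new q h' with h'' | ⟨h1, h2, _, _⟩
      · exact Or.inl h''
      · right
        have : p = (c, s) := Prod.ext h1 h2
        rw [this]; exact List.mem_cons_self
    · exact Or.inr (List.mem_cons_of_mem _ h')

theorem psa_cnt_mono_step (q : C → ℕ) (f : S → Option C) (p : C × S) (c : C) :
    psaCnt f c ≤ psaCnt (processPair q f p) c := by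
  apply Finset.card_le_card
  intro s hs
  simp only [Finset.mem_filter, Finset.mem_univ, true_and] at hs ⊢
  exact psa_step_some q hs

theorem psa_cnt_mono_foldl (q : C → ℕ) (f : S → Option C) (l : List (C × S)) (c : C) :
    psaCnt f c ≤ psaCnt (l.foldl (processPair q) f) c := by
  induction l generalizing f with
  | nil => exact le_rfl
  | cons p l ih => exact le_trans (psa_cnt_mono_step q f p c) (ih _)

theorem psa_cnt_step_le (q : C → ℕ) {f : S → Option C} (p : C × S) {c : C}
    (h : psaCnt f c ≤ q c) : psaCnt (processPair q f p) c ≤ q c := by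
  unfold processPair
  split
  · next hcond =>
    rcases eq_or_ne p.1 c with rfl | hne
    · have hsub : (Finset.univ.filter fun s => Function.update f p.2 (some p.1) s = some p.1)
          ⊆ insert p.2 (Finset.univ.filter fun s => f s = some p.1) := by
        intro s hs
        simp only [Finset.mem_filter, Finset.mem_univ, true_and] at hs
        rcases eq_or_ne s p.2 with rfl | hne2
        · exact Finset.mem_insert_self _ _
        · rw [Function.update_of_ne hne2] at hs
          exact Finset.mem_insert_of_mem (by simp [hs])
      calc psaCnt (Function.update f p.2 (some p.1)) p.1
          ≤ (insert p.2 (Finset.univ.filter fun s => f s = some p.1)).card :=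
            Finset.card_le_card hsub
        _ ≤ psaCnt f p.1 + 1 := Finset.card_insert_le _ _
        _ ≤ q p.1 := hcond.2
    · have heq : psaCnt (Function.update f p.2 (some p.1)) c = psaCnt f c := by
        unfold psaCnt
        congr 1
        apply Finset.filter_congr
        intro s _
        rcases eq_or_ne s p.2 with rfl | hne2
        · rw [Function.update_self, hcond.1]
          simp [hne]
        · rw [Function.update_of_ne hne2]
      show psaCnt (Function.update f p.2 (some p.1)) c ≤ q c
      rw [heq]; exact h
  · exact h

theorem psa_cnt_foldl_le (q : C → ℕ) {f : S → Option C} (l : List (C × S)) {c : C}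
    (h : psaCnt f c ≤ q c) : psaCnt (l.foldl (processPair q) f) c ≤ q c := by
  induction l generalizing f with
  | nil => exact h
  | cons p l ih => exact ih (psa_cnt_step_le q p h)

theorem psa_full_step (q : C → ℕ) {f : S → Option C} {p : C × S} {s : S} {c : C}
    (hfull : q c ≤ psaCnt f c) (h : processPair q f p s = some c) : f s = some c := by
  rcases psa_step_new q h with h' | ⟨h1, _, _, h4⟩
  · exact h'
  · omega

theorem psa_full_foldl (q : C → ℕ) {f : S → Option C} {s : S} {c : C}
    (l : List (C × S)) (hfull : q c ≤ psaCnt f c)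
    (h : (l.foldl (processPair q) f) s = some c) : f s = some c := by
  induction l generalizing f with
  | nil => exact h
  | cons p l ih =>
    exact psa_full_step q hfull (ih (le_trans hfull (psa_cnt_mono_step q f p c)) h)

theorem psa_cond_true (q : C → ℕ) {f : S → Option C} {p : C × S}
    (h1 : f p.2 = none) (h2 : psaCnt f p.1 < q p.1) :
    processPair q f p p.2 = some p.1 := by
  unfold processPair
  rw [if_pos ⟨h1, h2⟩, Function.update_self]

end Aux

/-- Process an enumeration of all center–site pairs, sorted by nondecreasing
distance, matching each pair whose site is unmatched and whose center is below quota.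
At the end every site is matched, every center `c` is assigned exactly `q c` sites, and
the resulting matching is stable. -/
theorem pair_sort_algorithm_correct {S C : Type*} [Fintype S] [Fintype C]
    [DecidableEq S] [DecidableEq C]
    (q : C → ℕ) (d : C → S → ℝ)
    (hq : ∑ c : C, q c = Fintype.card S)
    (L : List (C × S)) (hall : ∀ p : C × S, p ∈ L) (hnodup : L.Nodup)
    (hsorted : L.Pairwise fun p p' => d p.1 p.2 ≤ d p'.1 p'.2) :
    ∃ M : S → C,
      (∀ s : S, L.foldl (processPair q) (fun _ => none) s = some (M s)) ∧
      (∀ c : C, (Finset.univ.filter fun s => M s = c).card = q c) ∧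
      ¬ ∃ s : S, ∃ c : C, d c s < d (M s) s ∧
          ∃ s' : S, M s' = c ∧ d c s < d c s' := by
  classical
  set F := L.foldl (processPair q) (fun _ => none) with hFdef
  have hinit : ∀ c : C, psaCnt (fun _ : S => (none : Option C)) c = 0 := by
    intro c; unfold psaCnt; simp
  have hcntle : ∀ c : C, psaCnt F c ≤ q c := by
    intro c
    exact psa_cnt_foldl_le q L (by rw [hinit]; exact Nat.zero_le _)
  -- totality
  have htotal : ∀ s : S, F s ≠ none := by
    intro s0 h0
    have hex : ∃ c, psaCnt F c < q c := by
      by_contra hno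
      push_neg at hno
      have hdisj : ∀ c ∈ (Finset.univ : Finset C), ∀ c' ∈ (Finset.univ : Finset C), c ≠ c' →
          Disjoint (Finset.univ.filter fun s => F s = some c)
            (Finset.univ.filter fun s => F s = some c') := by
        intro c _ c' _ hne
        apply Finset.disjoint_left.mpr
        intro s hs hs'
        simp only [Finset.mem_filter, Finset.mem_univ, true_and] at hs hs'
        rw [hs] at hs'
        exact hne (Option.some.inj hs')
      have hsum : ∑ c : C, psaCnt F c =
          (Finset.univ.biUnion fun c => Finset.univ.filter fun s => F s = some c).card :=
        (Finset.card_biUnion hdisj).symm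
      have hsub : (Finset.univ.biUnion fun c => Finset.univ.filter fun s => F s = some c)
          ⊆ Finset.univ.erase s0 := by
        intro s hs
        simp only [Finset.mem_biUnion, Finset.mem_filter, Finset.mem_univ, true_and] at hs
        obtain ⟨c, hc⟩ := hs
        refine Finset.mem_erase.mpr ⟨?_, Finset.mem_univ _⟩
        rintro rfl
        rw [h0] at hc; exact absurd hc (by simp)
      have hcard_erase : (Finset.univ.erase s0).card = Fintype.card S - 1 := by
        rw [Finset.card_erase_of_mem (Finset.mem_univ _), Finset.card_univ]
      have hpos : 0 < Fintype.card S := Fintype.card_pos_iff.mpr ⟨s0⟩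
      have h1 : ∑ c : C, q c ≤ ∑ c : C, psaCnt F c :=
        Finset.sum_le_sum fun c _ => hno c
      have h2 : (Finset.univ.biUnion fun c => Finset.univ.filter fun s => F s = some c).card
          ≤ Fintype.card S - 1 := hcard_erase ▸ Finset.card_le_card hsub
      omega
    obtain ⟨c, hc⟩ := hex
    obtain ⟨l1, l2, hL⟩ := List.append_of_mem (hall (c, s0))
    set g := l1.foldl (processPair q) (fun _ => none) with hgdef
    have hF2 : F = l2.foldl (processPair q) (processPair q g (c, s0)) := by
      rw [hFdef, hL, List.foldl_append, List.foldl_cons]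
    have hg0 : g s0 = none := by
      cases hg : g s0 with
      | none => rfl
      | some c' =>
        have : F s0 = some c' := by
          rw [hF2]; exact psa_foldl_some q l2 (psa_step_some q hg)
        rw [h0] at this; exact absurd this (by simp)
    have hcg : psaCnt g c < q c := by
      have m1 : psaCnt g c ≤ psaCnt (processPair q g (c, s0)) c :=
        psa_cnt_mono_step q g (c, s0) c
      have m2 : psaCnt (processPair q g (c, s0)) c ≤ psaCnt F c := by
        rw [hF2]; exact psa_cnt_mono_foldl q _ l2 c
      omega
    have : F s0 = some c := by
      rw [hF2]
      exact psa_foldl_some q l2 (psa_cond_true q hg0 hcg)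
    rw [h0] at this; exact absurd this (by simp)
  have hMex : ∀ s : S, ∃ c : C, F s = some c := fun s =>
    Option.ne_none_iff_exists'.mp (htotal s)
  choose M hM using hMex
  have hfib : ∀ c : C, (Finset.univ.filter fun s => M s = c)
      = (Finset.univ.filter fun s => F s = some c) := by
    intro c
    apply Finset.filter_congr
    intro s _
    rw [hM s]
    constructor
    · rintro rfl; rfl
    · intro h; exact Option.some.inj h
  refine ⟨M, fun s => hM s, ?_, ?_⟩
  · -- exact quotas
    intro c
    rw [hfib c]
    by_contra hne
    have hlt : psaCnt F c < q c := lt_of_le_of_ne (hcntle c) hne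
    have hsum : ∑ c : C, psaCnt F c = Fintype.card S := by
      have := Finset.card_eq_sum_card_fiberwise
        (f := M) (s := (Finset.univ : Finset S)) (t := (Finset.univ : Finset C))
        (fun x _ => Finset.mem_univ _)
      rw [Finset.card_univ] at this
      rw [this]
      apply Finset.sum_congr rfl
      intro c _
      show (Finset.univ.filter fun s => F s = some c).card = _
      rw [← hfib c]
    have hstrict : ∑ c : C, psaCnt F c < ∑ c : C, q c :=
      Finset.sum_lt_sum (fun c _ => hcntle c) ⟨c, Finset.mem_univ c, hlt⟩
    omega
  · -- stability
    rintro ⟨s, c, hlt, s', hMs', hlt'⟩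
    have hFs' : F s' = some c := by rw [hM s', hMs']
    have hcne : c ≠ M s := by
      rintro rfl; exact lt_irrefl _ hlt
    obtain ⟨l1, l2, hL⟩ := List.append_of_mem (hall (c, s))
    set g := l1.foldl (processPair q) (fun _ => none) with hgdef
    have hF2 : F = l2.foldl (processPair q) (processPair q g (c, s)) := by
      rw [hFdef, hL, List.foldl_append, List.foldl_cons]
    rw [hL] at hsorted
    obtain ⟨-, hs2, hs12⟩ := List.pairwise_append.mp hsorted
    have hl1 : ∀ p ∈ l1, d p.1 p.2 ≤ d c s := fun p hp =>
      hs12 p hp (c, s) (List.mem_cons_self)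
    -- s is unmatched at g
    have hg0 : g s = none := by
      cases hg : g s with
      | none => rfl
      | some c'' =>
        have hFs : F s = some c'' := by
          rw [hF2]; exact psa_foldl_some q l2 (psa_step_some q hg)
        have hc'' : c'' = M s := by
          rw [hM s] at hFs; exact (Option.some.inj hFs).symm
        rcases psa_foldl_new q l1 hg with h | h
        · exact absurd h (by simp)
        · have := hl1 _ h
          rw [hc''] at this
          exact absurd hlt (not_lt.mpr this)
    -- c is full at g
    have hfull : q c ≤ psaCnt g c := by
      by_contra hn
      push_neg at hn
      have : F s = some c := by
        rw [hF2]
        exact psa_foldl_some q l2 (psa_cond_true q hg0 hn)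
      rw [hM s] at this
      exact hcne (Option.some.inj this).symm
    -- trace s' back
    have hfull' : q c ≤ psaCnt (processPair q g (c, s)) c :=
      le_trans hfull (psa_cnt_mono_step q g (c, s) c)
    have hg's' : processPair q g (c, s) s' = some c := by
      rw [hF2] at hFs'
      exact psa_full_foldl q l2 hfull' hFs'
    have hgs' : g s' = some c := psa_full_step q hfull hg's'
    rcases psa_foldl_new q l1 hgs' with h | h
    · exact absurd h (by simp)
    · have := hl1 _ h
      exact absurd hlt' (not_lt.mpr this)
end

section
/- Consider an instance of the stable matching problem with quotas in which the distance function d is injective. If M and M' are both stable matchings for this instance, then M = M'. In other words, when all center–site distances are distinct, the stable matching is unique. -/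
/-- `M : S → C` is a matching for quotas `q`: every center `c` is assigned exactly
`q c` sites. -/
def IsMatching {S C : Type*} [Fintype S] [DecidableEq C] (q : C → ℕ) (M : S → C) : Prop :=
  ∀ c : C, (Finset.univ.filter fun s => M s = c).card = q c

/-- `M : S → C` is stable for distances `d`: there is no blocking pair, i.e. no site `s`
and center `c` with `d c s < d (M s) s` such that some site `s'` matched to `c` satisfies
`d c s < d c s'`. -/
def IsStable {S C : Type*} (d : C → S → ℝ) (M : S → C) : Prop :=
  ¬ ∃ s : S, ∃ c : C, d c s < d (M s) s ∧ ∃ s' : S, M s' = c ∧ d c s < d c s'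

/-- Key lemma: if `(c, s)` is a minimum-distance edge among edges where the two
matchings differ, with `M s = c` but `M' s ≠ c`, then `M'` has a blocking pair. -/
lemma stable_aux {S C : Type*} [Fintype S] [Fintype C] [DecidableEq C]
    (q : C → ℕ) (d : C → S → ℝ)
    (hd : Function.Injective fun p : C × S => d p.1 p.2)
    (M M' : S → C) (hM : IsMatching q M) (hM' : IsMatching q M')
    (c : C) (s : S) (hMs : M s = c) (hM's : M' s ≠ c)
    (hmin : ∀ p : C × S, ((M p.2 = p.1 ∨ M' p.2 = p.1) ∧ M p.2 ≠ M' p.2) →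
      d c s ≤ d p.1 p.2) : ¬ IsStable d M' := by
  classical
  -- find s' matched to c by M' but not by M
  have hcard : (Finset.univ.filter fun x => M' x = c).card
      = (Finset.univ.filter fun x => M x = c).card := by
    rw [hM c, hM' c]
  have hnotsub : ¬ (Finset.univ.filter fun x => M' x = c)
      ⊆ (Finset.univ.filter fun x => M x = c) := by
    intro hsub
    have heq := Finset.eq_of_subset_of_card_le hsub (le_of_eq hcard.symm)
    have : s ∈ Finset.univ.filter fun x => M' x = c := by
      rw [heq]; simp [hMs]
    simp at this
    exact hM's this
  obtain ⟨s', hs'mem, hs'not⟩ := Finset.not_subset.mp hnotsub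
  simp only [Finset.mem_filter, Finset.mem_univ, true_and] at hs'mem hs'not
  -- strict inequality d c s < d c s'
  have h1 : d c s < d c s' := by
    have hle : d c s ≤ d c s' := hmin (c, s') ⟨Or.inr hs'mem, by
      simp only; rw [hs'mem]; exact hs'not⟩
    rcases lt_or_eq_of_le hle with h | h
    · exact h
    · exfalso
      have : (c, s) = (c, s') := hd h
      exact hs'not ((Prod.mk.injEq .. ▸ this).2 ▸ hMs)
  -- strict inequality d c s < d (M' s) s
  have h2 : d c s < d (M' s) s := by
    have hle : d c s ≤ d (M' s) s := hmin (M' s, s) ⟨Or.inr rfl, by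
      simp only; rw [hMs]; exact fun h => hM's h.symm⟩
    rcases lt_or_eq_of_le hle with h | h
    · exact h
    · exfalso
      have : (c, s) = (M' s, s) := hd h
      exact hM's ((Prod.mk.injEq .. ▸ this).1).symm
  intro hstab
  exact hstab ⟨s, c, h2, s', hs'mem, h1⟩

/-- In an instance of the stable matching problem with quotas in which the
distance function is injective, any two stable matchings coincide: the stable matching
is unique. -/
theorem stable_matching_unique {S C : Type*} [Fintype S] [Fintype C] [DecidableEq C]
    (q : C → ℕ) (d : C → S → ℝ)
    (hq : ∑ c : C, q c = Fintype.card S)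
    (hd : Function.Injective fun p : C × S => d p.1 p.2)
    (M M' : S → C)
    (hM : IsMatching q M) (hMs : IsStable d M)
    (hM' : IsMatching q M') (hM's : IsStable d M') :
    M = M' := by
  classical
  by_contra hne
  obtain ⟨s₀, hs₀⟩ := Function.ne_iff.mp hne
  set P : Finset (C × S) := Finset.univ.filter
    (fun p : C × S => (M p.2 = p.1 ∨ M' p.2 = p.1) ∧ M p.2 ≠ M' p.2) with hP
  have hPne : P.Nonempty := ⟨(M s₀, s₀), by simp [hP, hs₀]⟩
  obtain ⟨p₀, hp₀mem, hp₀min⟩ := P.exists_min_image (fun p => d p.1 p.2) hPne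
  simp only [hP, Finset.mem_filter, Finset.mem_univ, true_and] at hp₀mem
  obtain ⟨hor, hne'⟩ := hp₀mem
  have hmin : ∀ p : C × S, ((M p.2 = p.1 ∨ M' p.2 = p.1) ∧ M p.2 ≠ M' p.2) →
      d p₀.1 p₀.2 ≤ d p.1 p.2 := by
    intro p hp
    exact hp₀min p (by simp [hP, hp])
  rcases hor with h | h
  · exact stable_aux q d hd M M' hM hM' p₀.1 p₀.2 h (h ▸ hne'.symm) hmin hM's
  · refine stable_aux q d hd M' M hM' hM p₀.1 p₀.2 h (h ▸ hne') ?_ hMs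
    intro p hp
    exact hmin p ⟨hp.1.symm, hp.2.symm⟩
end

section
/- Consider an instance of the stable matching problem with quotas, and let (c*, s*) be a mutual nearest-neighbor pair. Then every stable matching M for this instance satisfies M(s*) = c*. -/
/-- A center `cstar` with `q cstar ≥ 1` and a site `sstar` form a mutual nearest-neighbor
pair if `d cstar sstar < d c sstar` for every center `c ≠ cstar` with `q c ≥ 1`, and
`d cstar sstar < d cstar s` for every site `s ≠ sstar`. -/
def IsMutualNN {S C : Type*} (q : C → ℕ) (d : C → S → ℝ) (cstar : C) (sstar : S) : Prop :=
  1 ≤ q cstar ∧ (∀ c : C, c ≠ cstar → 1 ≤ q c → d cstar sstar < d c sstar) ∧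
    (∀ s : S, s ≠ sstar → d cstar sstar < d cstar s)

/-- If `(cstar, sstar)` is a mutual nearest-neighbor pair, then every stable
matching `M` satisfies `M sstar = cstar`. -/
theorem mutual_nn_pair_matched {S C : Type*} [Fintype S] [Fintype C] [DecidableEq C]
    (q : C → ℕ) (d : C → S → ℝ)
    (hq : ∑ c : C, q c = Fintype.card S)
    (cstar : C) (sstar : S) (hmnn : IsMutualNN q d cstar sstar)
    (M : S → C) (hM : IsMatching q M) (hMs : IsStable d M) :
    M sstar = cstar := by
  obtain ⟨hq1, hC, hS⟩ := hmnn
  by_contra hne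
  -- q (M sstar) ≥ 1 since sstar is assigned to it
  have hqm : 1 ≤ q (M sstar) := by
    rw [← hM (M sstar)]
    exact Finset.card_pos.mpr ⟨sstar, by simp⟩
  have h1 : d cstar sstar < d (M sstar) sstar := hC _ (fun h => hne h) hqm
  -- some s' with M s' = cstar
  have : 0 < (Finset.univ.filter fun s => M s = cstar).card := by
    rw [hM cstar]; exact hq1
  obtain ⟨s', hs'⟩ := Finset.card_pos.mp this
  simp only [Finset.mem_filter] at hs'
  have hs'ne : s' ≠ sstar := fun h => hne (by rw [← h]; exact hs'.2)
  exact hMs ⟨sstar, cstar, h1, s', hs'.2, hS s' hs'ne⟩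
end

section
/- Consider an instance of the stable matching problem with quotas in which the distance function d is injective, and let (c*, s*) be a mutual nearest-neighbor pair. Then a function M : S → C is a stable matching of the full instance (S, C, q, d) if and only if M(s*) = c* and the restriction of M to S \ {s*} is a stable matching of the reduced instance (S \ {s*}, C, q', d), where q'(c*) = q(c*) − 1 and q' agrees with q on all other centers. In particular, it is safe to match a mutual nearest-neighbor pair early: doing so does not affect the stable matching of the remaining instance. -/
/-- `M` is a matching of the instance whose sites are the members of `sites`, with
quotas `q`: every center `c` is assigned exactly `q c` sites from `sites`. -/
def IsMatchingOn {S C : Type*} [DecidableEq C] (sites : Finset S) (q : C → ℕ)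
    (M : S → C) : Prop :=
  ∀ c : C, (sites.filter fun s => M s = c).card = q c

/-- `M` is stable on the instance whose sites are the members of `sites`: there is no
blocking pair among those sites. -/
def IsStableOn {S C : Type*} (sites : Finset S) (d : C → S → ℝ) (M : S → C) : Prop :=
  ¬ ∃ s ∈ sites, ∃ c : C, d c s < d (M s) s ∧ ∃ s' ∈ sites, M s' = c ∧ d c s < d c s'

/-- Mutual nearest-neighbor pair of the instance whose sites are the members of
`sites`. -/
def IsMutualNNOn {S C : Type*} (sites : Finset S) (q : C → ℕ) (d : C → S → ℝ)
    (cstar : C) (sstar : S) : Prop :=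
  sstar ∈ sites ∧ 1 ≤ q cstar ∧
    (∀ c : C, c ≠ cstar → 1 ≤ q c → d cstar sstar < d c sstar) ∧
    (∀ s ∈ sites, s ≠ sstar → d cstar sstar < d cstar s)

/-- With injective distances and a mutual nearest-neighbor pair
`(cstar, sstar)`, a function `M : S → C` is a stable matching of the full instance iff
`M sstar = cstar` and `M` restricted to `S \ {sstar}` is a stable matching of the reduced
instance in which the quota of `cstar` is decreased by one. -/
theorem stable_matching_reduction {S C : Type*} [Fintype S] [Fintype C]
    [DecidableEq S] [DecidableEq C]
    (q : C → ℕ) (d : C → S → ℝ)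
    (hq : ∑ c : C, q c = Fintype.card S)
    (hd : Function.Injective fun p : C × S => d p.1 p.2)
    (cstar : C) (sstar : S)
    (hmnn : IsMutualNNOn Finset.univ q d cstar sstar) (M : S → C) :
    (IsMatchingOn Finset.univ q M ∧ IsStableOn Finset.univ d M) ↔
      (M sstar = cstar ∧
        IsMatchingOn (Finset.univ.erase sstar) (Function.update q cstar (q cstar - 1)) M ∧
        IsStableOn (Finset.univ.erase sstar) d M) := by
  obtain ⟨-, hq1, hnn1, hnn2⟩ := hmnn
  constructor
  · rintro ⟨hmatch, hstable⟩
    have hMs : M sstar = cstar := by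
      by_contra hne
      have hcard : (Finset.univ.filter fun s => M s = cstar).card = q cstar := hmatch cstar
      have hpos : 0 < (Finset.univ.filter fun s => M s = cstar).card := by omega
      obtain ⟨s', hs'⟩ := Finset.card_pos.mp hpos
      simp only [Finset.mem_filter] at hs'
      have hs'ne : s' ≠ sstar := fun h => hne (h ▸ hs'.2)
      have hqM : 1 ≤ q (M sstar) := by
        have hm := hmatch (M sstar)
        have hpos : 0 < (Finset.univ.filter fun s => M s = M sstar).card :=
          Finset.card_pos.mpr ⟨sstar, by simp⟩
        omega
      exact hstable ⟨sstar, Finset.mem_univ _, cstar,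
        hnn1 _ hne hqM, s', Finset.mem_univ _, hs'.2,
        hnn2 s' (Finset.mem_univ _) hs'ne⟩
    refine ⟨hMs, ?_, ?_⟩
    · intro c
      rw [Finset.filter_erase]
      by_cases hc : c = cstar
      · rw [hc, Finset.card_erase_of_mem (by simp [hMs]), hmatch cstar,
          Function.update_self]
      · rw [Finset.erase_eq_of_notMem (by simp [hMs, Ne.symm hc]), hmatch c,
          Function.update_of_ne hc]
    · rintro ⟨s, hs, c, h1, s', hs', h2, h3⟩
      exact hstable ⟨s, Finset.mem_univ _, c, h1, s', Finset.mem_univ _, h2, h3⟩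
  · rintro ⟨hMs, hmatch, hstable⟩
    have hmatch' : IsMatchingOn Finset.univ q M := by
      intro c
      have h := hmatch c
      rw [Finset.filter_erase] at h
      by_cases hc : c = cstar
      · rw [hc] at h ⊢
        rw [Finset.card_erase_of_mem (by simp [hMs]), Function.update_self] at h
        have hpos : 0 < (Finset.univ.filter fun s => M s = cstar).card :=
          Finset.card_pos.mpr ⟨sstar, by simp [hMs]⟩
        omega
      · rwa [Finset.erase_eq_of_notMem (by simp [hMs, Ne.symm hc]),
          Function.update_of_ne hc] at h
    refine ⟨hmatch', ?_⟩
    rintro ⟨s, -, c, h1, s', -, h2, h3⟩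
    by_cases hs : s = sstar
    · subst hs
      rw [hMs] at h1
      by_cases hc : c = cstar
      · rw [hc] at h1; exact lt_irrefl _ h1
      · have hqc : 1 ≤ q c := by
          have hm := hmatch' c
          have hpos : 0 < (Finset.univ.filter fun s => M s = c).card :=
            Finset.card_pos.mpr ⟨s', by simp [h2]⟩
          omega
        exact absurd (hnn1 c hc hqc) (not_lt.mpr h1.le)
    · by_cases hs' : s' = sstar
      · subst hs'
        have hc : c = cstar := h2.symm.trans hMs
        rw [hc] at h3
        exact absurd (hnn2 s (Finset.mem_univ _) hs) (not_lt.mpr h3.le)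
      · exact hstable ⟨s, by simp [hs], c, h1, s', by simp [hs'], h2, h3⟩
end

section
/- In the bipartite nearest-neighbor setting with distinct distances, every cycle of the map nn has length two: if x is a point and m ≥ 1 is an integer with nn^m(x) = x (where nn^m denotes the m-fold iterate of nn), then nn(nn(x)) = x, i.e., x and nn(x) are mutual nearest neighbors. -/
/-- In the bipartite nearest-neighbor setting with pairwise distinct
distances, every cycle of the nearest-neighbor map `nn` has length two: if
`nn^[m] x = x` for some `m ≥ 1`, then `nn (nn x) = x`, i.e. `x` and `nn x` are mutual
nearest neighbors. -/
theorem nn_cycles_have_length_two {S C : Type*} [Fintype S] [Fintype C]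
    [Nonempty S] [Nonempty C]
    (d : S → C → ℝ)
    (hd : Function.Injective fun p : S × C => d p.1 p.2)
    (nn : S ⊕ C → S ⊕ C)
    (hnnS : ∀ s : S, ∃ c : C, nn (Sum.inl s) = Sum.inr c ∧
      ∀ c' : C, c' ≠ c → d s c < d s c')
    (hnnC : ∀ c : C, ∃ s : S, nn (Sum.inr c) = Sum.inl s ∧
      ∀ s' : S, s' ≠ s → d s c < d s' c)
    (x : S ⊕ C) (m : ℕ) (hm : 1 ≤ m) (hcycle : nn^[m] x = x) :
    nn (nn x) = x := by
  classical
  set f : S ⊕ C → ℝ := fun z =>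
    match z, nn z with
    | Sum.inl s, Sum.inr c => d s c
    | Sum.inr c, Sum.inl s => d s c
    | _, _ => 0 with hf
  have key : ∀ z, f (nn z) ≤ f z ∧ (nn (nn z) ≠ z → f (nn z) < f z) := by
    intro z
    match z with
    | Sum.inl s =>
      obtain ⟨c, hc, hmin⟩ := hnnS s
      obtain ⟨s', hs', hmin'⟩ := hnnC c
      have hfz : f (Sum.inl s) = d s c := by simp [hf, hc]
      have hfnz : f (nn (Sum.inl s)) = d s' c := by rw [hc]; simp [hf, hs']
      rw [hfz, hfnz]
      by_cases h : s' = s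
      · subst h
        constructor
        · exact le_refl _
        · intro hne; exact absurd (by rw [hc, hs']) hne
      · have hlt : d s' c < d s c := hmin' s (Ne.symm h)
        exact ⟨le_of_lt hlt, fun _ => hlt⟩
    | Sum.inr c =>
      obtain ⟨s, hs, hmin⟩ := hnnC c
      obtain ⟨c', hc', hmin'⟩ := hnnS s
      have hfz : f (Sum.inr c) = d s c := by simp [hf, hs]
      have hfnz : f (nn (Sum.inr c)) = d s c' := by rw [hs]; simp [hf, hc']
      rw [hfz, hfnz]
      by_cases h : c' = c
      · subst h
        constructor
        · exact le_refl _
        · intro hne; exact absurd (by rw [hs, hc']) hne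
      · have hlt : d s c' < d s c := hmin' c (Ne.symm h)
        exact ⟨le_of_lt hlt, fun _ => hlt⟩
  by_contra hne
  have hlt : f (nn x) < f x := (key x).2 hne
  have hmono : ∀ k, f (nn^[k] (nn x)) ≤ f (nn x) := by
    intro k
    induction k with
    | zero => simp
    | succ n ih =>
      rw [Function.iterate_succ_apply']
      exact le_trans (key _).1 ih
  have hx : nn^[m - 1] (nn x) = x := by
    have : nn^[m - 1] (nn x) = nn^[m] x := by
      rw [← Function.iterate_succ_apply, Nat.succ_eq_add_one, Nat.sub_add_cancel hm]
    rw [this, hcycle]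
  have := hmono (m - 1)
  rw [hx] at this
  exact absurd (lt_of_le_of_lt this hlt) (lt_irrefl _)
end

section
/- Consider an instance of the stable matching problem with quotas in which the distance function d is injective. Let s_1, …, s_N be an enumeration of S and let M : S → C be a function such that, for every i, the pair (M(s_i), s_i) is a mutual nearest-neighbor pair of the residual instance ({s_i, …, s_N}, C, q_i, d), where q_1 = q and q_{i+1} equals q_i with the quota of M(s_i) decreased by one. Then M is the unique stable matching of the instance (S, C, q, d). In other words, repeatedly matching an arbitrary mutual nearest-neighbor pair (in any order) until all sites are matched produces the stable matching. -/
/-- Decrease the quota of center `c` by one. -/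
def decQuota {C : Type*} [DecidableEq C] (q : C → ℕ) (c : C) : C → ℕ :=
  Function.update q c (q c - 1)

/-- Stability is inherited by subsets of sites. -/
lemma isStableOn_mono {S C : Type*} {t s : Finset S} {d : C → S → ℝ} {M : S → C}
    (h : t ⊆ s) (hst : IsStableOn s d M) : IsStableOn t d M := by
  rintro ⟨x, hx, c, h1, x', hx', h2, h3⟩
  exact hst ⟨x, h hx, c, h1, x', h hx', h2, h3⟩

/-- With injective distances, let `s_1, …, s_N` be an enumeration of the
sites (given by `e : Fin N ≃ S`) and suppose that for every `i` the pair
`(M (s_i), s_i)` is a mutual nearest-neighbor pair of the residual instance whose sites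
are `{s_i, …, s_N}` and whose quotas are `q` decreased by one for each previously matched
center. Then `M` is the unique stable matching of the instance: repeatedly matching an
arbitrary mutual nearest-neighbor pair produces the stable matching. -/
theorem mutual_nn_chain_gives_unique_stable_matching {S C : Type*} [Fintype S] [Fintype C]
    [DecidableEq S] [DecidableEq C]
    (q : C → ℕ) (d : C → S → ℝ)
    (hq : ∑ c : C, q c = Fintype.card S)
    (hd : Function.Injective fun p : C × S => d p.1 p.2)
    (e : Fin (Fintype.card S) ≃ S) (M : S → C)
    (hM : ∀ i : Fin (Fintype.card S),
      IsMutualNNOn (Finset.univ.filter fun s => (i : ℕ) ≤ ((e.symm s : Fin (Fintype.card S)) : ℕ))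
        (List.foldl decQuota q
          (((List.finRange (Fintype.card S)).take i).map fun j => M (e j)))
        d (M (e i)) (e i)) :
    (IsMatchingOn Finset.univ q M ∧ IsStableOn Finset.univ d M) ∧
      ∀ M' : S → C, IsMatchingOn Finset.univ q M' → IsStableOn Finset.univ d M' →
        M' = M := by
  classical
  let N : ℕ := Fintype.card S
  let sites : ℕ → Finset S := fun i =>
    Finset.univ.filter fun s => i ≤ ((e.symm s : Fin N) : ℕ)
  let Q : ℕ → C → ℕ := fun i =>
    List.foldl decQuota q (((List.finRange N).take i).map fun j => M (e j))
  have hM' : ∀ i : Fin N, IsMutualNNOn (sites (i : ℕ)) (Q (i : ℕ)) d (M (e i)) (e i) := hM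
  have hmemsites : ∀ (j : ℕ) (s : S), s ∈ sites j ↔ j ≤ ((e.symm s : Fin N) : ℕ) := by
    intro j s; simp [sites]
  have hmem : ∀ (i : ℕ) (hi : i < N), e ⟨i, hi⟩ ∈ sites i := by
    intro i hi; rw [hmemsites]; simp
  have herase : ∀ (i : ℕ) (hi : i < N), sites (i + 1) = (sites i).erase (e ⟨i, hi⟩) := by
    intro i hi; ext s
    rw [Finset.mem_erase, hmemsites, hmemsites]
    have hiff : s = e ⟨i, hi⟩ ↔ ((e.symm s : Fin N) : ℕ) = i := by
      rw [← Equiv.symm_apply_eq, Fin.ext_iff]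
    constructor
    · intro h
      have h1 : ¬ ((e.symm s : Fin N) : ℕ) = i := by omega
      exact ⟨fun hs => h1 (hiff.mp hs), by omega⟩
    · rintro ⟨hne, hle⟩
      have h1 : ¬ ((e.symm s : Fin N) : ℕ) = i := fun h => hne (hiff.mpr h)
      omega
  have hsub : ∀ i : ℕ, sites (i + 1) ⊆ sites i := by
    intro i s hs
    rw [hmemsites] at hs ⊢; omega
  have hempty : sites N = ∅ := by
    ext s; rw [hmemsites]
    simp only [Finset.notMem_empty, iff_false, not_le]
    exact (e.symm s).isLt
  have hQzero : Q 0 = q := by simp [Q]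
  have hQstep : ∀ (i : ℕ) (hi : i < N), Q (i + 1) = decQuota (Q i) (M (e ⟨i, hi⟩)) := by
    intro i hi
    show List.foldl decQuota q _ = _
    have htake : (List.finRange N).take (i + 1)
        = (List.finRange N).take i ++ [(⟨i, hi⟩ : Fin N)] := by
      rw [List.take_succ]
      have h : i < (List.finRange N).length := by simpa using hi
      simp [List.getElem?_eq_getElem h]
    rw [htake, List.map_append, List.foldl_append]
    rfl
  have hQpos : ∀ (i : ℕ) (hi : i < N), 1 ≤ Q i (M (e ⟨i, hi⟩)) := fun i hi =>
    (hM' ⟨i, hi⟩).2.1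
  have hsum : ∀ i ≤ N, ∑ c, Q i c = N - i := by
    intro i
    induction i with
    | zero => intro _; simpa [hQzero] using hq
    | succ i ih =>
      intro h
      have hi : i < N := h
      have hpos := hQpos i hi
      rw [hQstep i hi]
      have hupd : ∑ c, decQuota (Q i) (M (e ⟨i, hi⟩)) c
          = (Q i (M (e ⟨i, hi⟩)) - 1)
            + ∑ c ∈ Finset.univ \ {M (e ⟨i, hi⟩)}, Q i c := by
        unfold decQuota
        rw [Finset.sum_update_of_mem (Finset.mem_univ _)]
      have hsplit : ∑ c, Q i c
          = Q i (M (e ⟨i, hi⟩)) + ∑ c ∈ Finset.univ \ {M (e ⟨i, hi⟩)}, Q i c := by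
        rw [Finset.sdiff_singleton_eq_erase]
        exact (Finset.add_sum_erase _ _ (Finset.mem_univ _)).symm
      have hih := ih (le_of_lt hi)
      omega
  have hQN : ∀ c, Q N c = 0 := by
    have h := hsum N le_rfl
    simp only [Nat.sub_self] at h
    intro c
    exact Finset.sum_eq_zero_iff.mp h c (Finset.mem_univ c)
  have hcount : ∀ (i : ℕ) (hi : i < N) (F : S → C) (c : C),
      ((sites i).filter fun s => F s = c).card
        = ((sites (i + 1)).filter fun s => F s = c).card
          + (if F (e ⟨i, hi⟩) = c then 1 else 0) := by
    intro i hi F c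
    have h1 : sites i = insert (e ⟨i, hi⟩) (sites (i + 1)) := by
      rw [herase i hi, Finset.insert_erase (hmem i hi)]
    have h2 : e ⟨i, hi⟩ ∉ sites (i + 1) := by
      rw [herase i hi]; exact Finset.notMem_erase _ _
    rw [h1, Finset.filter_insert]
    by_cases hc : F (e ⟨i, hi⟩) = c
    · rw [if_pos hc, if_pos hc,
        Finset.card_insert_of_notMem (fun h => h2 (Finset.mem_filter.mp h).1)]
    · rw [if_neg hc, if_neg hc, add_zero]
  have hquota : ∀ (i : ℕ) (hi : i < N) (c : C),
      Q i c = Q (i + 1) c + (if M (e ⟨i, hi⟩) = c then 1 else 0) := by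
    intro i hi c
    rw [hQstep i hi]
    unfold decQuota
    rw [Function.update_apply]
    have hpos := hQpos i hi
    by_cases hc : c = M (e ⟨i, hi⟩)
    · subst hc; rw [if_pos rfl, if_pos rfl]; omega
    · rw [if_neg hc, if_neg (fun h => hc h.symm), add_zero]
  have main : ∀ (k i : ℕ), i ≤ N → N - i ≤ k →
      IsMatchingOn (sites i) (Q i) M ∧ IsStableOn (sites i) d M ∧
      (∀ M' : S → C, IsMatchingOn (sites i) (Q i) M' → IsStableOn (sites i) d M' →
        ∀ s ∈ sites i, M' s = M s) := by
    have hbase : IsMatchingOn (sites N) (Q N) M ∧ IsStableOn (sites N) d M ∧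
        (∀ M' : S → C, IsMatchingOn (sites N) (Q N) M' → IsStableOn (sites N) d M' →
          ∀ s ∈ sites N, M' s = M s) := by
      refine ⟨?_, ?_, ?_⟩
      · intro c; rw [hempty, hQN c]; simp
      · rintro ⟨s, hs, _⟩
        rw [hempty] at hs
        exact Finset.notMem_empty s hs
      · intro M' _ _ s hs
        rw [hempty] at hs
        exact absurd hs (Finset.notMem_empty s)
    intro k
    induction k with
    | zero =>
      intro i hi hk
      have : i = N := by omega
      subst this
      exact hbase
    | succ k ih =>
      intro i hi hk
      by_cases hiN : i = N
      · subst hiN; exact hbase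
      have hilt : i < N := lt_of_le_of_ne hi hiN
      obtain ⟨Hmatch, Hstable, Huniq⟩ := ih (i + 1) hilt (by omega)
      obtain ⟨hsmem, hqpos, hmn3, hmn4⟩ := hM' ⟨i, hilt⟩
      have HmatchM : IsMatchingOn (sites i) (Q i) M := by
        intro c
        rw [hcount i hilt M c, Hmatch c]
        exact (hquota i hilt c).symm
      have HstableM : IsStableOn (sites i) d M := by
        rintro ⟨s, hs, c, hlt, s', hs', hMs', hlt'⟩
        by_cases hss : s = e ⟨i, hilt⟩
        · subst hss
          have hcne : c ≠ M (e ⟨i, hilt⟩) := by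
            rintro rfl; exact lt_irrefl _ hlt
          have hqc : 1 ≤ Q i c := by
            rw [← HmatchM c]
            exact Finset.card_pos.mpr ⟨s', Finset.mem_filter.mpr ⟨hs', hMs'⟩⟩
          exact absurd hlt (lt_asymm (hmn3 c hcne hqc))
        · by_cases hs's : s' = e ⟨i, hilt⟩
          · subst hs's
            rw [← hMs'] at hlt'
            exact absurd hlt' (lt_asymm (hmn4 s hs hss))
          · apply Hstable
            refine ⟨s, ?_, c, hlt, s', ?_, hMs', hlt'⟩
            · rw [herase i hilt]; exact Finset.mem_erase.mpr ⟨hss, hs⟩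
            · rw [herase i hilt]; exact Finset.mem_erase.mpr ⟨hs's, hs'⟩
      refine ⟨HmatchM, HstableM, ?_⟩
      intro M' hm' hst'
      have hM's : M' (e ⟨i, hilt⟩) = M (e ⟨i, hilt⟩) := by
        by_contra hne
        have hq1 : 1 ≤ Q i (M' (e ⟨i, hilt⟩)) := by
          rw [← hm' (M' (e ⟨i, hilt⟩))]
          exact Finset.card_pos.mpr ⟨e ⟨i, hilt⟩, Finset.mem_filter.mpr ⟨hsmem, rfl⟩⟩
        have h3 : d (M (e ⟨i, hilt⟩)) (e ⟨i, hilt⟩) < d (M' (e ⟨i, hilt⟩)) (e ⟨i, hilt⟩) :=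
          hmn3 _ (fun h => hne h) hq1
        have hcard : 0 < ((sites i).filter fun s => M' s = M (e ⟨i, hilt⟩)).card := by
          rw [hm' (M (e ⟨i, hilt⟩))]; exact hqpos
        obtain ⟨s', hs'⟩ := Finset.card_pos.mp hcard
        obtain ⟨hs'mem, hMs'⟩ := Finset.mem_filter.mp hs'
        have hs'ne : s' ≠ e ⟨i, hilt⟩ := by
          rintro rfl; exact hne hMs'
        exact hst' ⟨e ⟨i, hilt⟩, hsmem, M (e ⟨i, hilt⟩), h3, s', hs'mem, hMs',
          hmn4 s' hs'mem hs'ne⟩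
      have hm'' : IsMatchingOn (sites (i + 1)) (Q (i + 1)) M' := by
        intro c
        have h := hm' c
        rw [hcount i hilt M' c, hM's] at h
        have h2 := hquota i hilt c
        omega
      have hst'' : IsStableOn (sites (i + 1)) d M' := isStableOn_mono (hsub i) hst'
      intro s hs
      by_cases hss : s = e ⟨i, hilt⟩
      · rw [hss, hM's]
      · exact Huniq M' hm'' hst'' s
          (by rw [herase i hilt]; exact Finset.mem_erase.mpr ⟨hss, hs⟩)
  obtain ⟨h1, h2, h3⟩ := main N 0 (Nat.zero_le N) (by omega)
  have hsites0 : sites 0 = Finset.univ := by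
    ext s; rw [hmemsites]; simp
  rw [hsites0, hQzero] at h1
  rw [hsites0] at h2
  refine ⟨⟨h1, h2⟩, fun M' hm hs => funext fun s => ?_⟩
  have hm2 : IsMatchingOn (sites 0) (Q 0) M' := by rw [hsites0, hQzero]; exact hm
  have hs2 : IsStableOn (sites 0) d M' := by rw [hsites0]; exact hs
  exact h3 M' hm2 hs2 s (by rw [hsites0]; exact Finset.mem_univ s)
end
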